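/- arXiv:1001.5304 — 3 statements merged into one kernel-verified Lean document; each statement's English description precedes it below -/
import Mathlib

section
/- Let R be a commutative ring with unity and let a, b ∈ R be such that a − b is a unit of R. Let A be an n×n upper triangular matrix over R all of whose diagonal entries equal a, and let B be an m×m upper triangular matrix over R all of whose diagonal entries equal b. If X is an m×n matrix over R satisfying X·A = B·X, then X = 0. -/
/-!
By Cayley–Hamilton, `(A - a)^n = 0`, since the characteristic polynomial of `A` is `(t - a)^n`.
The relation `X A = B X` persists for `A - a`, `B - a` and their powers, so `(B - a)^n X = 0`.
But `B - a` is upper triangular with the unit `b - a` on its diagonal, hence invertible.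
-/

open Matrix Polynomial

namespace Matrix

variable {R : Type*} [CommRing R] {m n : Type*} [Fintype m] [Fintype n]

theorem mul_pow_eq_pow_mul_of_mul_eq_mul [DecidableEq m] [DecidableEq n] {A : Matrix n n R}
    {B : Matrix m m R} {X : Matrix m n R} (hX : X * A = B * X) (k : ℕ) :
    X * A ^ k = B ^ k * X := by
  induction k with
  | zero => simp
  | succ k ih =>
    rw [pow_succ, ← Matrix.mul_assoc, ih, Matrix.mul_assoc, hX, pow_succ, Matrix.mul_assoc]

theorem mul_sub_algebraMap_eq_sub_algebraMap_mul [DecidableEq m] [DecidableEq n]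
    {A : Matrix n n R} {B : Matrix m m R} {X : Matrix m n R} (hX : X * A = B * X) (c : R) :
    X * (A - algebraMap R _ c) = (B - algebraMap R _ c) * X := by
  simp [Matrix.mul_sub, Matrix.sub_mul, hX, Algebra.algebraMap_eq_smul_one]

theorem pow_sub_algebraMap_eq_zero_of_isUpperTriangular [DecidableEq n] [LinearOrder n]
    {A : Matrix n n R} {a : R} (hA : A.IsUpperTriangular) (hdiag : ∀ i, A i i = a) :
    (A - algebraMap R _ a) ^ Fintype.card n = 0 := by
  have hchar : A.charpoly = (X - C a) ^ Fintype.card n := by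
    simp [charpoly_of_isUpperTriangular A hA, hdiag]
  simpa [hchar] using aeval_self_charpoly A

theorem isUnit_det_sub_algebraMap_of_isUpperTriangular [DecidableEq m] [LinearOrder m]
    {B : Matrix m m R} {a b : R} (hB : B.IsUpperTriangular) (hdiag : ∀ i, B i i = b)
    (hab : IsUnit (a - b)) : IsUnit (B - algebraMap R _ a).det := by
  have hdiag' : ∀ i, (B - algebraMap R _ a) i i = -(a - b) := by
    simp [hdiag, algebraMap_matrix_apply]
  have hupper : (B - algebraMap R _ a).IsUpperTriangular := hB.sub (blockTriangular_diagonal _)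
  rw [det_of_isUpperTriangular hupper]
  simpa only [hdiag', Finset.prod_const] using hab.neg.pow _

end Matrix

/-- Let `R` be a commutative ring and `a b : R` with `a - b` a unit.  If `A` is an
`n × n` upper triangular matrix with all diagonal entries equal to `a`, `B` is an
`m × m` upper triangular matrix with all diagonal entries equal to `b`, and `X` is an
`m × n` matrix with `X · A = B · X`, then `X = 0`. -/
theorem eq_zero_of_mul_eq_mul_of_upperTriangular
    {R : Type*} [CommRing R] {n m : ℕ} (a b : R) (hab : IsUnit (a - b))
    (A : Matrix (Fin n) (Fin n) R) (B : Matrix (Fin m) (Fin m) R)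
    (hA : A.BlockTriangular id) (hB : B.BlockTriangular id)
    (hAdiag : ∀ i, A i i = a) (hBdiag : ∀ i, B i i = b)
    (X : Matrix (Fin m) (Fin n) R) (hX : X * A = B * X) :
    X = 0 := by
  have hnil : (A - algebraMap R _ a) ^ n = 0 := by
    simpa only [Fintype.card_fin] using pow_sub_algebraMap_eq_zero_of_isUpperTriangular hA hAdiag
  have hBX : (B - algebraMap R _ a) ^ n * X = 0 := by
    rw [← mul_pow_eq_pow_mul_of_mul_eq_mul (mul_sub_algebraMap_eq_sub_algebraMap_mul hX a), hnil,
      Matrix.mul_zero]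
  have hunit : IsUnit ((B - algebraMap R _ a) ^ n).det := by
    simpa only [det_pow] using (isUnit_det_sub_algebraMap_of_isUpperTriangular hB hBdiag hab).pow n
  rw [← nonsing_inv_mul_cancel_left _ X hunit, hBX, Matrix.mul_zero]
end

section
/- Let R be a commutative ring with unity, let n₁, …, n_l be positive integers with n = n₁ + ⋯ + n_l, and let a₁, …, a_l ∈ R be such that aᵢ − aⱼ is a unit of R for all i ≠ j. For each i let Aᵢ be an upper triangular nᵢ×nᵢ matrix over R all of whose diagonal entries equal aᵢ, and let A be the block diagonal matrix with blocks A₁, …, A_l. Then an invertible n×n matrix g over R commutes with A if and only if g is block diagonal, g = diag(g₁, …, g_l), where each gᵢ is an invertible nᵢ×nᵢ matrix commuting with Aᵢ. In other words, Z_{GLₙ(R)}(A) = Z_{GL_{n₁}(R)}(A₁) ⊕ ⋯ ⊕ Z_{GL_{n_l}(R)}(A_l). -/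
/-!
If `A - a • 1` and `B - b • 1` are nilpotent and `a - b` is a unit, the Sylvester equation
`A * X = X * B` forces `X = 0`: iterating gives `(A - a)ᵏ X = X (B - a)ᵏ`, the left side vanishes
for large `k`, and `B - a = (B - b) + (b - a)` is a unit. By Cayley–Hamilton `Aᵢ - aᵢ` is
nilpotent for upper triangular `Aᵢ` with constant diagonal `aᵢ`, so every off-diagonal block of a
matrix commuting with `diag(A₁, …, A_l)` vanishes. Applied to `g` and `g⁻¹`, both are block
diagonal, and their diagonal blocks are mutually inverse.
-/

namespace Matrix

variable {R : Type*} [CommRing R]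

open Polynomial in
theorem isNilpotent_sub_smul_one_of_isUpperTriangular {n : Type*} [Fintype n] [DecidableEq n]
    [LinearOrder n] {M : Matrix n n R} (hM : M.IsUpperTriangular) {a : R}
    (hdiag : ∀ k, M k k = a) : IsNilpotent (M - a • 1) := by
  refine ⟨Fintype.card n, ?_⟩
  have := M.aeval_self_charpoly
  rwa [charpoly_of_isUpperTriangular M hM, Finset.prod_congr rfl fun k _ => by rw [hdiag k],
    Finset.prod_const, Finset.card_univ, map_pow, map_sub, aeval_X, aeval_C,
    Algebra.algebraMap_eq_smul_one] at this

theorem pow_mul_eq_mul_pow_of_mul_eq_mul {m n : Type*} [Fintype m] [Fintype n] [DecidableEq m]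
    [DecidableEq n] {A : Matrix m m R} {B : Matrix n n R} {X : Matrix m n R}
    (h : A * X = X * B) (k : ℕ) : A ^ k * X = X * B ^ k := by
  induction k with
  | zero => simp
  | succ k ih =>
    rw [pow_succ, Matrix.mul_assoc, h, ← Matrix.mul_assoc, ih, pow_succ, Matrix.mul_assoc]

theorem eq_zero_of_mul_eq_mul_of_isNilpotent {m n : Type*} [Fintype m] [Fintype n] [DecidableEq m]
    [DecidableEq n] {A : Matrix m m R} {B : Matrix n n R} {X : Matrix m n R} {a b : R}
    (hA : IsNilpotent (A - a • 1)) (hB : IsNilpotent (B - b • 1))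
    (hab : IsUnit (a - b)) (h : A * X = X * B) : X = 0 := by
  obtain ⟨k, hk⟩ := hA
  have hshift : (A - a • 1) * X = X * (B - a • 1) := by
    rw [Matrix.sub_mul, Matrix.mul_sub, h, Matrix.smul_mul, Matrix.mul_smul, Matrix.one_mul,
      Matrix.mul_one]
  have hunit : IsUnit (B - a • 1) := by
    have hc : IsUnit ((b - a) • (1 : Matrix n n R)) := by
      simpa [Algebra.algebraMap_eq_smul_one] using (hab.neg.map (algebraMap R (Matrix n n R)))
    have := hB.isUnit_add_right_of_commute hc (Commute.smul_right (Commute.one_right _) _)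
    rwa [sub_smul, sub_add_sub_cancel] at this
  obtain ⟨u, hu⟩ := hunit.pow k
  refine mul_left_injective_of_inv _ _ u.mul_inv ?_
  change X * (u : Matrix n n R) = 0 * (u : Matrix n n R)
  rw [hu, ← pow_mul_eq_mul_pow_of_mul_eq_mul hshift, hk, Matrix.zero_mul, Matrix.zero_mul]

section BlockDiagonal

variable {ι : Type*} [Fintype ι] [DecidableEq ι] {m n p : ι → Type*} [∀ i, Fintype (n i)]

theorem submatrix_sigmaMk_mul_blockDiagonal' (X : Matrix (Σ i, m i) (Σ i, n i) R)
    (A : ∀ i, Matrix (n i) (p i) R) (i j : ι) :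
    (X * blockDiagonal' A).submatrix (Sigma.mk i) (Sigma.mk j) =
      X.submatrix (Sigma.mk i) (Sigma.mk j) * A j := by
  ext k q
  rw [submatrix_apply, mul_apply, ← Finset.univ_sigma_univ, Finset.sum_sigma,
    Finset.sum_eq_single j (fun b _ hb => Finset.sum_eq_zero fun r _ => by
      rw [blockDiagonal'_apply_ne _ _ _ hb, mul_zero]) (by simp)]
  simp [mul_apply]

theorem submatrix_sigmaMk_blockDiagonal'_mul (A : ∀ i, Matrix (m i) (n i) R)
    (X : Matrix (Σ i, n i) (Σ i, p i) R) (i j : ι) :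
    (blockDiagonal' A * X).submatrix (Sigma.mk i) (Sigma.mk j) =
      A i * X.submatrix (Sigma.mk i) (Sigma.mk j) := by
  ext k q
  rw [submatrix_apply, mul_apply, ← Finset.univ_sigma_univ, Finset.sum_sigma,
    Finset.sum_eq_single i (fun b _ hb => Finset.sum_eq_zero fun r _ => by
      rw [blockDiagonal'_apply_ne _ _ _ hb.symm, zero_mul]) (by simp)]
  simp [mul_apply]

theorem commute_blockDiagonal'_iff {G A : ∀ i, Matrix (n i) (n i) R} :
    Commute (blockDiagonal' G) (blockDiagonal' A) ↔ ∀ i, Commute (G i) (A i) := by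
  simp only [Commute, SemiconjBy, ← blockDiagonal'_mul, blockDiagonal'_injective.eq_iff,
    funext_iff]

end BlockDiagonal

section Centralizer

variable {ι : Type*} [Fintype ι] [DecidableEq ι] {m : ι → Type*} [∀ i, Fintype (m i)]
  [∀ i, DecidableEq (m i)] {A : ∀ i, Matrix (m i) (m i) R}

theorem eq_blockDiagonal'_blockDiag'_of_commute {a : ι → R}
    (hA : ∀ i, IsNilpotent (A i - a i • 1)) (ha : ∀ i j, i ≠ j → IsUnit (a i - a j))
    {X : Matrix (Σ i, m i) (Σ i, m i) R} (hX : Commute X (blockDiagonal' A)) :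
    X = blockDiagonal' (blockDiag' X) := by
  ext ⟨i, k⟩ ⟨j, q⟩
  rcases eq_or_ne i j with rfl | hij
  · rw [blockDiagonal'_apply_eq, blockDiag'_apply]
  · have hblock : A i * X.submatrix (Sigma.mk i) (Sigma.mk j) =
        X.submatrix (Sigma.mk i) (Sigma.mk j) * A j := by
      rw [← submatrix_sigmaMk_blockDiagonal'_mul, ← submatrix_sigmaMk_mul_blockDiagonal', hX.eq]
    rw [blockDiagonal'_apply_ne _ _ _ hij]
    exact congrFun₂ (eq_zero_of_mul_eq_mul_of_isNilpotent (hA i) (hA j) (ha i j hij) hblock) k q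

theorem commute_blockDiagonal'_iff_exists_blockDiagonal' {a : ι → R}
    (hA : ∀ i, IsNilpotent (A i - a i • 1)) (ha : ∀ i j, i ≠ j → IsUnit (a i - a j))
    (g : GL (Σ i, m i) R) :
    Commute (g : Matrix (Σ i, m i) (Σ i, m i) R) (blockDiagonal' A) ↔
      ∃ gs : ∀ i, GL (m i) R, (∀ i, Commute (gs i : Matrix (m i) (m i) R) (A i)) ∧
        (g : Matrix (Σ i, m i) (Σ i, m i) R) = blockDiagonal' fun i => ↑(gs i) := by
  constructor
  · intro hg
    set G := blockDiag' (g : Matrix (Σ i, m i) (Σ i, m i) R)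
    set H := blockDiag' (↑g⁻¹ : Matrix (Σ i, m i) (Σ i, m i) R)
    have hG : ↑g = blockDiagonal' G := eq_blockDiagonal'_blockDiag'_of_commute hA ha hg
    have hH : ↑g⁻¹ = blockDiagonal' H :=
      eq_blockDiagonal'_blockDiag'_of_commute hA ha hg.units_inv_left
    have hGH : G * H = 1 := blockDiagonal'_injective <| by
      rw [Pi.mul_def, blockDiagonal'_mul, ← hG, ← hH, g.mul_inv, blockDiagonal'_one]
    refine ⟨fun i => ⟨G i, H i, congrFun hGH i, mul_eq_one_comm.mp (congrFun hGH i)⟩, ?_, hG⟩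
    rw [hG] at hg
    exact commute_blockDiagonal'_iff.mp hg
  · rintro ⟨gs, hgs, hg⟩
    rw [hg]
    exact commute_blockDiagonal'_iff.mpr hgs

end Centralizer

end Matrix

theorem centralizer_blockDiagonal_upperTriangular_general
    {R : Type*} [CommRing R] {l : ℕ} (ni : Fin l → ℕ)
    (a : Fin l → R) (ha : ∀ i j, i ≠ j → IsUnit (a i - a j))
    (A : ∀ i, Matrix (Fin (ni i)) (Fin (ni i)) R)
    (hA : ∀ i, (A i).BlockTriangular id)
    (hAdiag : ∀ i k, A i k k = a i)
    (g : GL ((i : Fin l) × Fin (ni i)) R) :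
    ((↑g : Matrix ((i : Fin l) × Fin (ni i)) ((i : Fin l) × Fin (ni i)) R) *
        Matrix.blockDiagonal' A =
      Matrix.blockDiagonal' A * (↑g : Matrix ((i : Fin l) × Fin (ni i)) ((i : Fin l) × Fin (ni i)) R)) ↔
      ∃ gs : ∀ i, GL (Fin (ni i)) R,
        (∀ i, (↑(gs i) : Matrix (Fin (ni i)) (Fin (ni i)) R) * A i =
            A i * (↑(gs i) : Matrix (Fin (ni i)) (Fin (ni i)) R)) ∧
          (↑g : Matrix ((i : Fin l) × Fin (ni i)) ((i : Fin l) × Fin (ni i)) R) =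
            Matrix.blockDiagonal' (fun i => ↑(gs i)) :=
  Matrix.commute_blockDiagonal'_iff_exists_blockDiagonal'
    (fun i => Matrix.isNilpotent_sub_smul_one_of_isUpperTriangular (hA i) (hAdiag i)) ha g

/-- Let `R` be a commutative ring, `n₁, …, n_l` positive integers, and
`a₁, …, a_l ∈ R` with `aᵢ - aⱼ` a unit for `i ≠ j`.  Let `Aᵢ` be an upper triangular
`nᵢ × nᵢ` matrix with all diagonal entries `aᵢ`, and let `A` be the block diagonal
matrix with blocks `A₁, …, A_l`.  Then an invertible matrix `g` commutes with `A` if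
and only if `g` is block diagonal with blocks `gᵢ` invertible and commuting with
`Aᵢ`; i.e. `Z_{GLₙ(R)}(A) = ⊕ᵢ Z_{GL_{nᵢ}(R)}(Aᵢ)`. -/
theorem centralizer_blockDiagonal_upperTriangular
    {R : Type*} [CommRing R] {l : ℕ} (ni : Fin l → ℕ) (hni : ∀ i, 0 < ni i)
    (a : Fin l → R) (ha : ∀ i j, i ≠ j → IsUnit (a i - a j))
    (A : ∀ i, Matrix (Fin (ni i)) (Fin (ni i)) R)
    (hA : ∀ i, (A i).BlockTriangular id)
    (hAdiag : ∀ i k, A i k k = a i)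
    (g : GL ((i : Fin l) × Fin (ni i)) R) :
    ((↑g : Matrix ((i : Fin l) × Fin (ni i)) ((i : Fin l) × Fin (ni i)) R) *
        Matrix.blockDiagonal' A =
      Matrix.blockDiagonal' A * (↑g : Matrix ((i : Fin l) × Fin (ni i)) ((i : Fin l) × Fin (ni i)) R)) ↔
      ∃ gs : ∀ i, GL (Fin (ni i)) R,
        (∀ i, (↑(gs i) : Matrix (Fin (ni i)) (Fin (ni i)) R) * A i =
            A i * (↑(gs i) : Matrix (Fin (ni i)) (Fin (ni i)) R)) ∧
          (↑g : Matrix ((i : Fin l) × Fin (ni i)) ((i : Fin l) × Fin (ni i)) R) =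
            Matrix.blockDiagonal' (fun i => ↑(gs i)) :=
  centralizer_blockDiagonal_upperTriangular_general ni a ha A hA hAdiag g
end

section
/- Let O be a discrete valuation ring with maximal ideal m and finite residue field k = O/m, let O₂ = O/m², let κ₀ : O₂ → k be the natural quotient map and κ : GLₙ(O₂) → GLₙ(k) the induced reduction homomorphism. Let s : k → O₂ be a set-theoretic section of κ₀ (κ₀ ∘ s = id) with s(0) = 0 and s(1) = 1, and let 𝔰 : Mₙ(k) → Mₙ(O₂) be its entrywise extension. Let A ∈ Mₙ(k) be a split matrix in Jordan canonical form: A is the block diagonal matrix with blocks A₁, …, A_l, where Aᵢ = aᵢ·I + (block diagonal of principal nilpotent matrices N_{λ_{i1}}, …, N_{λ_{i lᵢ}}) and a₁, …, a_l are pairwise distinct elements of k. Then κ maps the centralizer Z_{GLₙ(O₂)}(𝔰(A)) onto the centralizer Z_{GLₙ(k)}(A): κ( Z_{GLₙ(O₂)}(𝔰(A)) ) = Z_{GLₙ(k)}(A). -/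
open Matrix

/-- The `s × s` principal nilpotent matrix: `1`s on the superdiagonal, `0` elsewhere. -/
def principalNilpotent (R : Type*) [Zero R] [One R] (s : ℕ) :
    Matrix (Fin s) (Fin s) R :=
  Matrix.of fun i j => if (i : ℕ) + 1 = (j : ℕ) then 1 else 0

/-- Index type for a matrix in Jordan canonical form with eigenvalue blocks of sizes
`lam i j` (block `j` of eigenvalue `i`). -/
abbrev JIdx (l : ℕ) (c : Fin l → ℕ) (lam : (i : Fin l) → Fin (c i) → ℕ) : Type :=
  (i : Fin l) × ((j : Fin (c i)) × Fin (lam i j))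

/-- The reduction map `O/m² → O/m = k`. -/
noncomputable def redRes (O : Type) [CommRing O] [IsLocalRing O] :
    O ⧸ (IsLocalRing.maximalIdeal O ^ 2) →+* IsLocalRing.ResidueField O :=
  Ideal.Quotient.factor (S := IsLocalRing.maximalIdeal O ^ 2) (T := IsLocalRing.maximalIdeal O)
    (Ideal.pow_le_self two_ne_zero)

/-- The reduction homomorphism `κ : GL_ι(O/m²) → GL_ι(k)`. -/
noncomputable def redGL (O : Type) [CommRing O] [IsLocalRing O]
    (ι : Type) [Fintype ι] [DecidableEq ι] :
    GL ι (O ⧸ (IsLocalRing.maximalIdeal O ^ 2)) →* GL ι (IsLocalRing.ResidueField O) :=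
  Matrix.GeneralLinearGroup.map (redRes O)

/-!
Write the Jordan matrix as `D + N`, with `D` diagonal and `N` the matrix of the partial
permutation moving each index one step along its Jordan block. If `g` commutes with `D + N`
over `k`, then `ad D` and `-ad N` agree on `g`; they commute and `ad N` is nilpotent, so a power
of `ad D` kills `g`. Since `ad D` scales the entry `(p, q)` by `d p - d q`, `g` vanishes off the
eigenvalue blocks, and therefore commutes with `D` and `N` separately. Both properties survive
applying `s` entrywise: vanishing because `s 0 = 0`, and commuting with a 0/1 partial permutation
matrix because multiplying by it only moves entries around. Hence `𝔰(g)` commutes with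
`𝔰(A) = 𝔰(D) + N`, and it is invertible because `O/m² → k` is a local homomorphism.
-/

namespace Matrix

variable {ι : Type*} [Fintype ι] [DecidableEq ι]

attribute [local instance] LieRing.ofAssociativeRing

theorem isNilpotent_of_apply_ne_zero_lt {R : Type*} [Semiring R] (M : Matrix ι ι R) (μ : ι → ℕ)
    (hμ : ∀ p q, M p q ≠ 0 → μ q < μ p) : IsNilpotent M := by
  have key : ∀ m p q, (M ^ m) p q ≠ 0 → μ q + m ≤ μ p := by
    intro m
    induction m with
    | zero =>
      intro p q h
      obtain rfl : p = q := by_contra fun hpq => h (by simp [one_apply_ne hpq])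
      simp
    | succ m ih =>
      intro p q h
      rw [pow_succ, mul_apply] at h
      obtain ⟨t, -, ht⟩ := Finset.exists_ne_zero_of_sum_ne_zero h
      have h1 := ih p t (left_ne_zero_of_mul ht)
      have h2 := hμ t q (right_ne_zero_of_mul ht)
      omega
  refine ⟨Finset.univ.sup μ + 1, Matrix.ext fun p q => by_contra fun h => ?_⟩
  have := key _ p q h
  have := Finset.le_sup (f := μ) (Finset.mem_univ p)
  omega

theorem ad_diagonal_pow_apply {K : Type*} [CommRing K] (d : ι → K) (m : ℕ)
    (X : Matrix ι ι K) (p q : ι) :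
    (LieAlgebra.ad K (Matrix ι ι K) (diagonal d) ^ m) X p q = (d p - d q) ^ m * X p q := by
  induction m generalizing X with
  | zero => simp
  | succ m ih =>
    rw [pow_succ, Module.End.mul_apply, ih, LieAlgebra.ad_apply, Ring.lie_def, sub_apply,
      diagonal_mul, mul_diagonal]
    ring

theorem apply_eq_zero_of_commute_diagonal_add {K : Type*} [CommRing K] [NoZeroDivisors K]
    {d : ι → K} {N g : Matrix ι ι K} (hN : IsNilpotent N) (hdN : Commute (diagonal d) N)
    (hg : Commute g (diagonal d + N)) {p q : ι} (hpq : d p ≠ d q) : g p q = 0 := by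
  set ad := LieAlgebra.ad K (Matrix ι ι K)
  have hcomm : Commute (ad (diagonal d)) (-ad N) := by
    refine (commute_iff_lie_eq.mpr ?_).neg_right
    rw [← LieHom.map_lie, commute_iff_lie_eq.mp hdN, map_zero]
  obtain ⟨m, hm⟩ := (LieAlgebra.ad_nilpotent_of_nilpotent (R := K) hN).neg
  have hg' : ad (diagonal d + N) g = 0 := by
    rw [LieAlgebra.ad_apply, ← commute_iff_lie_eq]
    exact hg.symm
  -- `x ^ m - y ^ m` factors through `x - y = ad (diagonal d + N)`, which kills `g`
  have hpow : (ad (diagonal d) ^ m) g = 0 := by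
    have := congrArg (· g) (hcomm.geom_sum₂_mul m)
    rwa [Module.End.mul_apply, sub_neg_eq_add, ← map_add, hg', map_zero, hm, sub_zero,
      eq_comm] at this
  have hpq_entry := congrFun (congrFun hpow p) q
  rw [ad_diagonal_pow_apply] at hpq_entry
  exact (mul_eq_zero.mp hpq_entry).resolve_left (pow_ne_zero _ (sub_ne_zero.mpr hpq))

theorem commute_diagonal_of_apply_eq_zero {R : Type*} [CommSemiring R] {d : ι → R}
    {M : Matrix ι ι R} (hM : ∀ p q, d p ≠ d q → M p q = 0) : Commute M (diagonal d) := by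
  ext p q
  rw [mul_diagonal, diagonal_mul]
  by_cases h : d p = d q
  · rw [h, mul_comm]
  · rw [hM p q h, mul_zero, zero_mul]

end Matrix

namespace PEquiv

variable {ι α β : Type*} [DecidableEq ι] [NonAssocSemiring α] [NonAssocSemiring β]
  (f : ι ≃. ι) {φ : α → β}

theorem map_mul_toMatrix [Fintype ι] (hφ : φ 0 = 0) (M : Matrix ι ι α) :
    (M * f.toMatrix).map φ = M.map φ * f.toMatrix := by
  ext p q
  rw [map_apply, mul_toMatrix_apply, mul_toMatrix_apply]
  cases f.symm q <;> simp [hφ]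

theorem map_toMatrix_mul [Fintype ι] (hφ : φ 0 = 0) (M : Matrix ι ι α) :
    (f.toMatrix * M).map φ = f.toMatrix * M.map φ := by
  ext p q
  rw [map_apply, toMatrix_mul_apply, toMatrix_mul_apply]
  cases f p <;> simp [hφ]

theorem commute_map_toMatrix [Fintype ι] (hφ : φ 0 = 0) {M : Matrix ι ι α}
    (hM : Commute M f.toMatrix) : Commute (M.map φ) f.toMatrix := by
  rw [Commute, SemiconjBy, ← f.map_mul_toMatrix hφ, ← f.map_toMatrix_mul hφ, hM.eq]

theorem commute_diagonal_toMatrix [Fintype ι] {d : ι → α} (hd : ∀ p q, q ∈ f p → d q = d p) :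
    Commute (diagonal d) f.toMatrix := by
  ext p q
  rw [diagonal_mul, mul_diagonal, toMatrix_apply]
  split_ifs with h
  · rw [hd p q h, mul_one, one_mul]
  · rw [mul_zero, zero_mul]

theorem map_diagonal_add_toMatrix (hf : ∀ p, p ∉ f p) (hφ₀ : φ 0 = 0) (hφ₁ : φ 1 = 1)
    (d : ι → α) : (diagonal d + f.toMatrix).map φ = diagonal (φ ∘ d) + f.toMatrix := by
  ext p q
  rw [map_apply, Matrix.add_apply, Matrix.add_apply, toMatrix_apply, toMatrix_apply]
  by_cases hpq : p = q
  · subst hpq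
    simp [hf p]
  · simp only [diagonal_apply_ne _ hpq, zero_add]
    split_ifs <;> assumption

theorem commute_map_of_commute_diagonal_add_toMatrix {K R : Type*} [Fintype ι] [CommRing K]
    [NoZeroDivisors K] [CommSemiring R] (hf : IsNilpotent (f.toMatrix : Matrix ι ι K))
    {d : ι → K} (hd : ∀ p q, q ∈ f p → d q = d p)
    {φ : K → R} (hφ : φ 0 = 0) {g : Matrix ι ι K} (hg : Commute g (diagonal d + f.toMatrix)) :
    Commute (g.map φ) (diagonal (φ ∘ d) + f.toMatrix) := by
  have hblock : ∀ p q, d p ≠ d q → g p q = 0 := fun p q =>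
    apply_eq_zero_of_commute_diagonal_add hf (f.commute_diagonal_toMatrix hd) hg
  have hgN : Commute g f.toMatrix := by
    simpa using hg.sub_right (commute_diagonal_of_apply_eq_zero hblock)
  refine .add_right (commute_diagonal_of_apply_eq_zero fun p q hpq => ?_)
    (f.commute_map_toMatrix hφ hgN)
  rw [map_apply, hblock p q fun h => hpq (congrArg φ h), hφ]

end PEquiv

instance isLocalHom_redRes (O : Type) [CommRing O] [IsLocalRing O] : IsLocalHom (redRes O) :=
  have : Nontrivial (O ⧸ IsLocalRing.maximalIdeal O ^ 2) :=
    Ideal.Quotient.nontrivial_iff.mpr ((Ideal.pow_le_self two_ne_zero).trans_lt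
      (IsLocalRing.maximalIdeal.isMaximal O).ne_top.lt_top).ne
  have := IsLocalRing.of_surjective' (Ideal.Quotient.mk (IsLocalRing.maximalIdeal O ^ 2))
    Ideal.Quotient.mk_surjective
  .of_surjective _ (Ideal.Quotient.factor_surjective _)

theorem Matrix.GeneralLinearGroup.exists_coe_eq_and_map_eq {ι R S : Type*} [Fintype ι]
    [DecidableEq ι] [CommRing R] [CommRing S] (f : R →+* S) [IsLocalHom f] {M : Matrix ι ι R}
    {x : GL ι S} (hM : M.map f = x) : ∃ G : GL ι R, (G : Matrix ι ι R) = M ∧ map f G = x := by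
  have hdet : IsUnit M.det := isUnit_of_map_unit f _ <| by
    rw [RingHom.map_det, RingHom.mapMatrix_apply, hM]
    exact x.isUnit.map detMonoidHom
  exact ⟨(M.isUnit_iff_isUnit_det.mpr hdet).unit, rfl, Units.ext hM⟩

theorem JIdx.eq_iff {l : ℕ} {c : Fin l → ℕ} {lam : (i : Fin l) → Fin (c i) → ℕ}
    {p q : JIdx l c lam} :
    p = q ↔ p.1 = q.1 ∧ (p.2.1 : ℕ) = q.2.1 ∧ (p.2.2 : ℕ) = q.2.2 := by
  refine ⟨by rintro rfl; simp, ?_⟩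
  obtain ⟨i, j, r⟩ := p
  obtain ⟨i', j', r'⟩ := q
  rintro ⟨rfl, hj, hr⟩
  obtain rfl := Fin.ext hj
  obtain rfl := Fin.ext hr
  rfl

def jordanShift (l : ℕ) (c : Fin l → ℕ) (lam : (i : Fin l) → Fin (c i) → ℕ) :
    JIdx l c lam ≃. JIdx l c lam where
  toFun p := if h : (p.2.2 : ℕ) + 1 < lam p.1 p.2.1 then some ⟨p.1, p.2.1, ⟨p.2.2 + 1, h⟩⟩
    else none
  invFun q := if h : 0 < (q.2.2 : ℕ) then some ⟨q.1, q.2.1, ⟨q.2.2 - 1, by omega⟩⟩ else none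
  inv p q := by
    obtain ⟨i, j, r⟩ := p
    obtain ⟨i', j', r'⟩ := q
    dsimp only
    split_ifs <;> simp only [Option.some.injEq, iff_false, false_iff,
      JIdx.eq_iff, not_and]
    · constructor <;> rintro ⟨rfl, hj, hr⟩ <;> exact ⟨rfl, hj.symm, by omega⟩
    · rintro rfl hj
      obtain rfl := Fin.ext hj
      omega
    · omega

section JordanShift

variable {l : ℕ} {c : Fin l → ℕ} {lam : (i : Fin l) → Fin (c i) → ℕ}

theorem mem_jordanShift_iff {p q : JIdx l c lam} :
    q ∈ jordanShift l c lam p ↔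
      ∃ h : (p.2.2 : ℕ) + 1 < lam p.1 p.2.1, q = ⟨p.1, p.2.1, ⟨p.2.2 + 1, h⟩⟩ := by
  change (if h : _ then _ else _) = _ ↔ _
  split_ifs with h <;> simp [h, eq_comm]

theorem fst_of_mem_jordanShift {p q : JIdx l c lam} (h : q ∈ jordanShift l c lam p) :
    q.1 = p.1 := by
  obtain ⟨-, rfl⟩ := mem_jordanShift_iff.mp h
  rfl

theorem not_mem_jordanShift_self (p : JIdx l c lam) : p ∉ jordanShift l c lam p := by
  intro h
  obtain ⟨_, hp⟩ := mem_jordanShift_iff.mp h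
  have := congrArg (fun q : JIdx l c lam => (q.2.2 : ℕ)) hp
  simp at this

theorem isNilpotent_toMatrix_jordanShift (R : Type*) [Semiring R] :
    IsNilpotent ((jordanShift l c lam).toMatrix : Matrix _ _ R) := by
  refine isNilpotent_of_apply_ne_zero_lt _ (fun p => lam p.1 p.2.1 - p.2.2) fun p q hpq => ?_
  rw [PEquiv.toMatrix_apply, ite_ne_right_iff] at hpq
  obtain ⟨h, rfl⟩ := mem_jordanShift_iff.mp hpq.1
  dsimp only
  omega

theorem blockDiagonal'_principalNilpotent_eq_toMatrix_jordanShift (R : Type*) [Zero R] [One R] :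
    blockDiagonal' (fun i => blockDiagonal' fun j => principalNilpotent R (lam i j)) =
      (jordanShift l c lam).toMatrix := by
  ext ⟨i, j, r⟩ ⟨i', j', r'⟩
  simp only [PEquiv.toMatrix_apply, mem_jordanShift_iff]
  by_cases hi : i = i'
  · subst hi
    rw [blockDiagonal'_apply_eq]
    by_cases hj : j = j'
    · subst hj
      rw [blockDiagonal'_apply_eq, principalNilpotent, of_apply]
      by_cases h : (r : ℕ) + 1 = r'
      · rw [if_pos h, if_pos ⟨h ▸ r'.isLt, JIdx.eq_iff.mpr ⟨rfl, rfl, h.symm⟩⟩]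
      · rw [if_neg h, if_neg fun ⟨_, hr⟩ => h (JIdx.eq_iff.mp hr).2.2.symm]
    · rw [blockDiagonal'_apply_ne _ _ _ hj]
      simp [Ne.symm hj]
  · rw [blockDiagonal'_apply_ne _ _ _ hi]
    simp [Ne.symm hi]

end JordanShift

theorem blockDiagonal'_smul_one_add_principalNilpotent {l : ℕ} {c : Fin l → ℕ}
    {lam : (i : Fin l) → Fin (c i) → ℕ} {R : Type*} [Semiring R] (a : Fin l → R) :
    blockDiagonal' (fun i => a i • (1 : Matrix ((j : Fin (c i)) × Fin (lam i j)) _ R) +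
        blockDiagonal' fun j => principalNilpotent R (lam i j)) =
      diagonal (fun p : JIdx l c lam => a p.1) + (jordanShift l c lam).toMatrix := by
  refine (blockDiagonal'_add _ _).trans ?_
  simp only [smul_one_eq_diagonal, blockDiagonal'_diagonal,
    blockDiagonal'_principalNilpotent_eq_toMatrix_jordanShift]

theorem image_centralizer_section_jordan_eq_centralizer_general
    (O : Type) [CommRing O] [IsDomain O] [IsDiscreteValuationRing O]
    (s : IsLocalRing.ResidueField O → O ⧸ (IsLocalRing.maximalIdeal O ^ 2))
    (hs : ∀ x, redRes O (s x) = x) (hs0 : s 0 = 0) (hs1 : s 1 = 1)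
    (l : ℕ) (a : Fin l → IsLocalRing.ResidueField O)
    (c : Fin l → ℕ) (lam : (i : Fin l) → Fin (c i) → ℕ)
    (A : Matrix (JIdx l c lam) (JIdx l c lam) (IsLocalRing.ResidueField O))
    (hA : A = Matrix.blockDiagonal' (fun i =>
      a i • (1 : Matrix ((j : Fin (c i)) × Fin (lam i j)) ((j : Fin (c i)) × Fin (lam i j))
          (IsLocalRing.ResidueField O)) +
        Matrix.blockDiagonal' (fun j => principalNilpotent (IsLocalRing.ResidueField O)
          (lam i j)))) :
    (redGL O (JIdx l c lam)) ''
        {g : GL (JIdx l c lam) (O ⧸ (IsLocalRing.maximalIdeal O ^ 2)) |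
          (↑g : Matrix (JIdx l c lam) (JIdx l c lam) (O ⧸ (IsLocalRing.maximalIdeal O ^ 2))) *
              A.map s =
            A.map s *
              (↑g : Matrix (JIdx l c lam) (JIdx l c lam)
                (O ⧸ (IsLocalRing.maximalIdeal O ^ 2)))} =
      {g : GL (JIdx l c lam) (IsLocalRing.ResidueField O) |
        (↑g : Matrix (JIdx l c lam) (JIdx l c lam) (IsLocalRing.ResidueField O)) * A =
          A * (↑g : Matrix (JIdx l c lam) (JIdx l c lam) (IsLocalRing.ResidueField O))} := by
  rw [blockDiagonal'_smul_one_add_principalNilpotent] at hA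
  have hAs : A.map s = diagonal (s ∘ fun p => a p.1) + (jordanShift l c lam).toMatrix := by
    rw [hA]
    exact PEquiv.map_diagonal_add_toMatrix _ not_mem_jordanShift_self hs0 hs1 _
  have hsection {M : Matrix (JIdx l c lam) (JIdx l c lam) _} : (M.map s).map (redRes O) = M := by
    rw [map_map, (funext hs : ⇑(redRes O) ∘ s = id), map_id]
  ext x
  constructor
  · rintro ⟨G, hG, rfl⟩
    change Commute _ _
    rw [← hsection (M := A)]
    exact Commute.map hG (RingHom.mapMatrix (redRes O))
  · intro hx
    rw [hA] at hx
    obtain ⟨G, hGs, hGx⟩ :=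
      GeneralLinearGroup.exists_coe_eq_and_map_eq (redRes O) (hsection (M := x))
    refine ⟨G, ?_, hGx⟩
    change Commute _ _
    rw [hGs, hAs]
    exact (jordanShift l c lam).commute_map_of_commute_diagonal_add_toMatrix
      (isNilpotent_toMatrix_jordanShift _) (fun p q h => by rw [fst_of_mem_jordanShift h]) hs0 hx

/-- Let `O` be a discrete valuation ring with finite residue field `k`, `O₂ = O/m²`,
`κ₀ : O₂ → k` the quotient map and `κ` the induced map on `GL`.  Let `s : k → O₂` be a
section of `κ₀` with `s(0) = 0`, `s(1) = 1`, extended entrywise to matrices.  Let `A`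
be a split matrix over `k` in Jordan canonical form: block diagonal with blocks
`Aᵢ = aᵢ·I + (block diagonal of principal nilpotent matrices)`, the `aᵢ` pairwise
distinct.  Then `κ` maps the centralizer of `𝔰(A)` in `GL(O₂)` onto the centralizer
of `A` in `GL(k)`. -/
theorem image_centralizer_section_jordan_eq_centralizer
    (O : Type) [CommRing O] [IsDomain O] [IsDiscreteValuationRing O]
    [Finite (IsLocalRing.ResidueField O)]
    (s : IsLocalRing.ResidueField O → O ⧸ (IsLocalRing.maximalIdeal O ^ 2))
    (hs : ∀ x, redRes O (s x) = x) (hs0 : s 0 = 0) (hs1 : s 1 = 1)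
    (l : ℕ) (a : Fin l → IsLocalRing.ResidueField O) (ha : Function.Injective a)
    (c : Fin l → ℕ) (lam : (i : Fin l) → Fin (c i) → ℕ) (hlam : ∀ i j, 1 ≤ lam i j)
    (A : Matrix (JIdx l c lam) (JIdx l c lam) (IsLocalRing.ResidueField O))
    (hA : A = Matrix.blockDiagonal' (fun i =>
      a i • (1 : Matrix ((j : Fin (c i)) × Fin (lam i j)) ((j : Fin (c i)) × Fin (lam i j))
          (IsLocalRing.ResidueField O)) +
        Matrix.blockDiagonal' (fun j => principalNilpotent (IsLocalRing.ResidueField O)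
          (lam i j)))) :
    (redGL O (JIdx l c lam)) ''
        {g : GL (JIdx l c lam) (O ⧸ (IsLocalRing.maximalIdeal O ^ 2)) |
          (↑g : Matrix (JIdx l c lam) (JIdx l c lam) (O ⧸ (IsLocalRing.maximalIdeal O ^ 2))) *
              A.map s =
            A.map s *
              (↑g : Matrix (JIdx l c lam) (JIdx l c lam)
                (O ⧸ (IsLocalRing.maximalIdeal O ^ 2)))} =
      {g : GL (JIdx l c lam) (IsLocalRing.ResidueField O) |
        (↑g : Matrix (JIdx l c lam) (JIdx l c lam) (IsLocalRing.ResidueField O)) * A =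
          A * (↑g : Matrix (JIdx l c lam) (JIdx l c lam) (IsLocalRing.ResidueField O))} :=
  image_centralizer_section_jordan_eq_centralizer_general O s hs hs0 hs1 l a c lam A hA
end
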